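/- Let (p,q,(u,v)) be an extremal on [t0,t1] that is v-singular (φ_v ≡ 0 on [t0,t1]) but such that φ_u does not vanish identically on [t0,t1]. Then φ_u(t) ≠ 0 for every t ∈ [t0,t1]; in particular, φ_u has constant sign and no u-switching can occur along the extremal. -/
import Mathlib


open MeasureTheory Set

noncomputable section

/-- Euclidean dot product on `ℝⁿ`. -/
def dotp {n : ℕ} (p q : Fin n → ℝ) : ℝ := ∑ i, p i * q i

/-- Lie bracket `[F, G](x) = DG(x) F(x) - DF(x) G(x)`. -/
def lieBracket {n : ℕ} (F G : (Fin n → ℝ) → (Fin n → ℝ)) (x : Fin n → ℝ) : Fin n → ℝ :=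
  fderiv ℝ G x (F x) - fderiv ℝ F x (G x)

/-- Determinant of two vectors of `ℝ²`. -/
def det2 (x y : Fin 2 → ℝ) : ℝ := x 0 * y 1 - x 1 * y 0

/-- An admissible pair on `[t0, t1]` for the control-affine system
`q' = v F(q) + u G(q)` with controls in `U = [-a, a] × [b, c]`. -/
def AdmissiblePair {n : ℕ} (F G : (Fin n → ℝ) → (Fin n → ℝ)) (a b c t0 t1 : ℝ)
    (q : ℝ → Fin n → ℝ) (u v : ℝ → ℝ) : Prop :=
  Measurable u ∧ Measurable v ∧
  (∀ᵐ t ∂volume, t ∈ Icc t0 t1 → u t ∈ Icc (-a) a ∧ v t ∈ Icc b c) ∧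
  (∃ K, LipschitzOnWith K q (Icc t0 t1)) ∧
  (∀ᵐ t ∂volume, t ∈ Icc t0 t1 →
    HasDerivWithinAt q (fun i => v t * F (q t) i + u t * G (q t) i) (Icc t0 t1) t)

/-- An extremal (in the sense of the Pontryagin Maximum Principle) of the control-affine
system `q' = v F(q) + u G(q)` with controls in `U = [-a, a] × [b, c]`, with multiplier
`lam ≥ 0`: the covector `p` is Lipschitz, never vanishing, satisfies the adjoint
equation `p' = -(v (DF)ᵀ + u (DG)ᵀ) p` a.e., the maximality condition a.e., and the
Hamiltonian is constant equal to `lam` a.e. -/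
def IsExtremal {n : ℕ} (F G : (Fin n → ℝ) → (Fin n → ℝ)) (a b c t0 t1 : ℝ)
    (p q : ℝ → Fin n → ℝ) (u v : ℝ → ℝ) (lam : ℝ) : Prop :=
  AdmissiblePair F G a b c t0 t1 q u v ∧
  (∃ K, LipschitzOnWith K p (Icc t0 t1)) ∧
  (∀ t ∈ Icc t0 t1, p t ≠ 0) ∧
  (∀ᵐ t ∂volume, t ∈ Icc t0 t1 →
    HasDerivWithinAt p
      (fun i => -(v t * dotp (p t) (fderiv ℝ F (q t) (Pi.single i 1)) +
                  u t * dotp (p t) (fderiv ℝ G (q t) (Pi.single i 1))))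
      (Icc t0 t1) t) ∧
  0 ≤ lam ∧
  (∀ᵐ t ∂volume, t ∈ Icc t0 t1 →
    (∀ w ∈ Icc (-a) a, ∀ z ∈ Icc b c,
      z * dotp (p t) (F (q t)) + w * dotp (p t) (G (q t)) ≤
      v t * dotp (p t) (F (q t)) + u t * dotp (p t) (G (q t))) ∧
    v t * dotp (p t) (F (q t)) + u t * dotp (p t) (G (q t)) = lam)

/-- A continuous nonvanishing function on an interval has constant sign. -/
lemma aux_sign_const (φ : ℝ → ℝ) (t0 t1 : ℝ) (ht : t0 ≤ t1)
    (hc : ContinuousOn φ (Icc t0 t1)) (hnz : ∀ t ∈ Icc t0 t1, φ t ≠ 0) :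
    (∀ t ∈ Icc t0 t1, 0 < φ t) ∨ (∀ t ∈ Icc t0 t1, φ t < 0) := by
  rcases (hnz t0 ⟨le_rfl, ht⟩).lt_or_gt with hneg | hpos
  · right
    intro s hs
    by_contra h
    push_neg at h
    have hsub : Icc t0 s ⊆ Icc t0 t1 := Icc_subset_Icc le_rfl hs.2
    have := intermediate_value_Icc hs.1 (hc.mono hsub)
    obtain ⟨r, hr, hr0⟩ := this ⟨hneg.le, h⟩
    exact hnz r (hsub hr) hr0
  · left
    intro s hs
    by_contra h
    push_neg at h
    have hsub : Icc t0 s ⊆ Icc t0 t1 := Icc_subset_Icc le_rfl hs.2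
    have := intermediate_value_Icc' hs.1 (hc.mono hsub)
    obtain ⟨r, hr, hr0⟩ := this ⟨h, hpos.le⟩
    exact hnz r (hsub hr) hr0

/-- Along a `v`-singular extremal such that `φ_u` does not vanish identically,
the switching function `φ_u` never vanishes; in particular it has constant sign
and no `u`-switching can occur. -/
theorem v_singular_no_u_switching {n : ℕ}
    (F G : (Fin n → ℝ) → (Fin n → ℝ))
    (hF : ContDiff ℝ (⊤ : ℕ∞) F) (hG : ContDiff ℝ (⊤ : ℕ∞) G)
    (a b c : ℝ) (ha : 0 < a) (hb : 0 < b) (hbc : b ≤ c)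
    (t0 t1 : ℝ) (ht : t0 ≤ t1)
    (p q : ℝ → Fin n → ℝ) (u v : ℝ → ℝ) (lam : ℝ)
    (hext : IsExtremal F G a b c t0 t1 p q u v lam)
    (hvsing : ∀ t ∈ Icc t0 t1, dotp (p t) (F (q t)) = 0)
    (hu : ¬ ∀ t ∈ Icc t0 t1, dotp (p t) (G (q t)) = 0) :
    (∀ t ∈ Icc t0 t1, dotp (p t) (G (q t)) ≠ 0) ∧
    ((∀ t ∈ Icc t0 t1, 0 < dotp (p t) (G (q t))) ∨
     (∀ t ∈ Icc t0 t1, dotp (p t) (G (q t)) < 0)) := by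
  obtain ⟨⟨humeas, hvmeas, hbox, ⟨Kq, hqlip⟩, hode⟩, ⟨Kp, hplip⟩, hpne, hadj, hlam, hmax⟩ := hext
  set φ : ℝ → ℝ := fun t => dotp (p t) (G (q t)) with hφ
  -- continuity of the switching function
  have hφcont : ContinuousOn φ (Icc t0 t1) := by
    have hpc : ContinuousOn p (Icc t0 t1) := hplip.continuousOn
    have hqc : ContinuousOn q (Icc t0 t1) := hqlip.continuousOn
    have hGq : ContinuousOn (fun t => G (q t)) (Icc t0 t1) :=
      hG.continuous.comp_continuousOn hqc
    simp only [hφ, dotp]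
    apply continuousOn_finset_sum
    intro i _
    exact ((continuous_apply i).comp_continuousOn hpc).mul
      ((continuous_apply i).comp_continuousOn hGq)
  -- a.e. identity a * |φ t| = lam
  have hae : ∀ᵐ t ∂volume, t ∈ Icc t0 t1 → a * |φ t| = lam := by
    filter_upwards [hbox, hmax] with t hbt hmt htmem
    obtain ⟨hub, _⟩ := hbt htmem
    obtain ⟨hmax', heq⟩ := hmt htmem
    have hv0 : dotp (p t) (F (q t)) = 0 := hvsing t htmem
    rw [hv0] at heq hmax'
    simp only [mul_zero, zero_add] at heq hmax'
    have hbmem : b ∈ Icc b c := ⟨le_rfl, hbc⟩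
    have h1 : a * φ t ≤ lam := by
      have := hmax' a ⟨by linarith, le_rfl⟩ b hbmem
      linarith
    have h2 : -a * φ t ≤ lam := by
      have := hmax' (-a) ⟨le_rfl, by linarith⟩ b hbmem
      linarith
    have hle : a * |φ t| ≤ lam := by
      rcases abs_cases (φ t) with ⟨h, _⟩ | ⟨h, _⟩ <;> rw [h] <;> linarith
    have hge : lam ≤ a * |φ t| := by
      calc lam = u t * φ t := heq.symm
        _ ≤ |u t * φ t| := le_abs_self _
        _ = |u t| * |φ t| := abs_mul _ _
        _ ≤ a * |φ t| := by
            apply mul_le_mul_of_nonneg_right _ (abs_nonneg _)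
            exact abs_le.mpr ⟨hub.1, hub.2⟩
    linarith
  -- never vanishing
  have hnz : ∀ t ∈ Icc t0 t1, φ t ≠ 0 := by
    rcases eq_or_lt_of_le ht with hteq | htlt
    · -- degenerate interval: Icc t0 t1 = {t0}
      push_neg at hu
      obtain ⟨s, hs, hsne⟩ := hu
      intro t htmem
      have hs0 : s = t0 := le_antisymm (hteq ▸ hs.2) hs.1
      have ht0 : t = t0 := le_antisymm (hteq ▸ htmem.2) htmem.1
      rw [ht0, ← hs0]
      exact hsne
    · -- nondegenerate interval: a |φ| = lam everywhere by continuity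
      have haemeq : (fun t => a * |φ t|) =ᵐ[volume.restrict (Icc t0 t1)] fun _ => lam :=
        (ae_restrict_iff' measurableSet_Icc).mpr hae
      have heqon : EqOn (fun t => a * |φ t|) (fun _ => lam) (Icc t0 t1) :=
        Measure.eqOn_Icc_of_ae_eq volume (ne_of_lt htlt) haemeq
          (continuousOn_const.mul hφcont.abs) continuousOn_const
      have hlampos : 0 < lam := by
        rcases hlam.lt_or_eq with h | h
        · exact h
        · exfalso
          apply hu
          intro t htmem
          have := heqon htmem
          simp only at this
          have : |φ t| = 0 := by
            rw [← h] at this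
            nlinarith [abs_nonneg (φ t)]
          exact abs_eq_zero.mp this
      intro t htmem h0
      have := heqon htmem
      simp only [h0, abs_zero, mul_zero] at this
      linarith
  exact ⟨hnz, aux_sign_const φ t0 t1 ht hφcont hnz⟩
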